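/- arXiv:2009.00690 — 3 statements merged into one kernel-verified Lean document; each statement's English description precedes it below -/
import Mathlib

section
/- Let Ω ⊆ ℝ^n be compact and nonempty and h : ℝ^n × ℝ^m → ℝ be twice continuously differentiable in its first variable. Fix λ' ∈ ℝ^m, suppose the inner solution set Ω*_{λ'} is nonempty, that every ω* ∈ Ω*_{λ'} satisfies ∇_ω h(ω*, λ') = 0, and that there is S > 0 such that ‖∇²_{ωω} h(ω, λ') v‖ ≥ S‖v‖ for all v ∈ ℝ^n whenever ∇_ω h(ω, λ') ≠ 0. Then for every ω ∈ Ω, the distance from ω to Ω*_{λ'} satisfies d(ω, Ω*_{λ'}) ≤ ‖∇_ω h(ω, λ')‖ / S. -/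
open Set Filter Metric

noncomputable section

/-- The inner solution set `Ω*_λ = {ω ∈ Ω : h(ω, λ) ≤ h(ω', λ) for all ω' ∈ Ω}`. -/
def innerSol {n m : ℕ}
    (h : EuclideanSpace ℝ (Fin n) × EuclideanSpace ℝ (Fin m) → ℝ)
    (Ω : Set (EuclideanSpace ℝ (Fin n))) (lam : EuclideanSpace ℝ (Fin m)) :
    Set (EuclideanSpace ℝ (Fin n)) :=
  {ω ∈ Ω | ∀ ω' ∈ Ω, h (ω, lam) ≤ h (ω', lam)}

/-!
Let `g = ∇_ω h(·, λ')`, a C¹ self-map of `ℝⁿ` whose derivative is the Hessian. The set where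
`S‖v‖ ≤ ‖Dg(x) v‖` fails for some `v` is open and contained in `{g = 0}`, so `Dg` vanishes on its
closure and the set is clopen. Hence it is empty, unless `g ≡ 0`; in that case `h(·, λ')` is
constant and every point of `Ω` is an inner solution.

Once the bound holds everywhere, `g` is a local homeomorphism, and on every compact set it has
local inverses of a common radius that stretch distances by at most `1/κ`, for any `κ < S`.
Chaining them lifts every segment `[g x, y]` to a path that starts at `x` and ends within
`‖y - g x‖/κ` of it. Lift the straight-line homotopy from `g` to the constant map `g x'`; by the
monodromy theorem, the lift of `[g x, g x']` starting at `x` ends at `x'`. This is Hadamard's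
global inverse function theorem in the quantitative form `S‖x - x'‖ ≤ ‖g x - g x'‖`. Taking `x'`
to be an inner solution, which is a critical point, gives the bound.
-/

open Topology unitInterval
open scoped NNReal

theorem ContinuousOn.ite_le_of_Icc {α β : Type*} [LinearOrder α] [TopologicalSpace α]
    [OrderClosedTopology α] [TopologicalSpace β] {f f' : α → β} {a b c : α}
    (hf : ContinuousOn f (Icc a b)) (hf' : ContinuousOn f' (Icc b c)) (hb : f b = f' b)
    (hab : a ≤ b) (hbc : b ≤ c) :
    ContinuousOn (fun t => if t ≤ b then f t else f' t) (Icc a c) := by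
  rw [← Icc_union_Icc_eq_Icc hab hbc]
  refine (hf.congr fun t ht => if_pos ht.2).union_of_isClosed (hf'.congr fun t ht => ?_)
    isClosed_Icc isClosed_Icc
  split_ifs with h
  · rw [le_antisymm h ht.1, hb]
  · rfl

section Lifting

variable {E F : Type*} [NormedAddCommGroup E] [NormedAddCommGroup F] [NormedSpace ℝ F]

def HasUniformLocalInverses (g : E → F) (κ : ℝ) : Prop :=
  ∀ K : Set E, IsCompact K → ∃ ρ > 0, ∀ p ∈ K, ∃ ψ : F → E,
    ContinuousOn ψ (closedBall (g p) ρ) ∧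
      ∀ z ∈ closedBall (g p) ρ, g (ψ z) = z ∧ κ * ‖ψ z - p‖ ≤ ‖z - g p‖

def IsSegmentLift (g : E → F) (κ : ℝ) (x : E) (y : F) (T : ℝ) (Γ : ℝ → E) : Prop :=
  ContinuousOn Γ (Icc 0 T) ∧ Γ 0 = x ∧
    ∀ t ∈ Icc 0 T, g (Γ t) = AffineMap.lineMap (g x) y t ∧ κ * ‖Γ t - x‖ ≤ t * ‖y - g x‖

theorem HasUniformLocalInverses.exists_isSegmentLift_extend [ProperSpace E] {g : E → F}
    {κ : ℝ} (hg : HasUniformLocalInverses g κ) (hκ : 0 < κ) (x : E) (y : F) :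
    ∃ δ > 0, ∀ {T T' : ℝ} {Γ : ℝ → E}, 0 ≤ T → T ≤ T' → T' ≤ T + δ → T' ≤ 1 →
      IsSegmentLift g κ x y T Γ → ∃ Γ', IsSegmentLift g κ x y T' Γ' := by
  set d := ‖y - g x‖
  set γ : ℝ → F := fun t => AffineMap.lineMap (g x) y t
  have hγ : Continuous γ := AffineMap.lineMap_continuous
  have hγdist : ∀ s t, ‖γ t - γ s‖ = |t - s| * d := fun s t => by
    rw [← dist_eq_norm, dist_lineMap_lineMap, Real.dist_eq, dist_comm, dist_eq_norm]
  -- every lift stays in this ball, so one radius `ρ` of local inverses serves all steps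
  obtain ⟨ρ, hρ, hψ⟩ := hg (closedBall x (d / κ)) (isCompact_closedBall _ _)
  refine ⟨ρ / (d + 1), by positivity, fun {T T' Γ} hT hTT' hT'δ hT'1 ⟨hcont, hΓ0, hΓ⟩ => ?_⟩
  obtain ⟨hgΓ, hΓT⟩ := hΓ T (right_mem_Icc.2 hT)
  obtain ⟨ψ, hψcont, hψ⟩ := hψ (Γ T) <| by
    rw [mem_closedBall_iff_norm, le_div_iff₀' hκ]
    exact hΓT.trans (mul_le_of_le_one_left (norm_nonneg _) (hTT'.trans hT'1))
  rw [hgΓ] at hψcont hψ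
  have hγmem : MapsTo γ (Icc T T') (closedBall (γ T) ρ) := fun t ht => by
    rw [mem_closedBall_iff_norm, hγdist, abs_of_nonneg (sub_nonneg.2 ht.1)]
    calc (t - T) * d ≤ ρ / (d + 1) * d := by gcongr; linarith [ht.2]
      _ ≤ ρ := by
        rw [div_mul_eq_mul_div, div_le_iff₀ (by positivity)]
        nlinarith
  have hψT : Γ T = ψ (γ T) := by
    have := (hψ _ (mem_closedBall_self hρ.le)).2
    rw [sub_self, norm_zero] at this
    exact (sub_eq_zero.1 (norm_le_zero_iff.1 (nonpos_of_mul_nonpos_right this hκ))).symm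
  refine ⟨fun t => if t ≤ T then Γ t else ψ (γ t),
    hcont.ite_le_of_Icc (hψcont.comp hγ.continuousOn hγmem) hψT hT hTT', by simp [hΓ0, hT],
    fun t ht => ?_⟩
  dsimp only
  split_ifs with h
  · exact hΓ t ⟨ht.1, h⟩
  have ht' : t ∈ Icc T T' := ⟨le_of_not_ge h, ht.2⟩
  obtain ⟨hgψ, hψt⟩ := hψ _ (hγmem ht')
  refine ⟨hgψ, ?_⟩
  calc κ * ‖ψ (γ t) - x‖ ≤ κ * ‖ψ (γ t) - Γ T‖ + κ * ‖Γ T - x‖ := by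
        rw [← mul_add]
        gcongr
        exact norm_sub_le_norm_sub_add_norm_sub _ _ _
    _ ≤ ‖γ t - γ T‖ + T * d := add_le_add hψt hΓT
    _ = t * d := by rw [hγdist, abs_of_nonneg (sub_nonneg.2 ht'.1)]; ring

theorem HasUniformLocalInverses.exists_lift_lineMap [ProperSpace E] {g : E → F} {κ : ℝ}
    (hg : HasUniformLocalInverses g κ) (hκ : 0 < κ) (x : E) (y : F) :
    ∃ Γ : C(I, E), Γ 0 = x ∧ (∀ t : I, g (Γ t) = AffineMap.lineMap (g x) y (t : ℝ)) ∧
      κ * ‖Γ 1 - x‖ ≤ ‖y - g x‖ := by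
  obtain ⟨δ, hδ, hext⟩ := hg.exists_isSegmentLift_extend hκ x y
  obtain ⟨N, hN⟩ := exists_nat_gt δ⁻¹
  have hN0 : (0 : ℝ) < N := (inv_pos.2 hδ).trans hN
  have hlift : ∀ k ≤ N, ∃ Γ, IsSegmentLift g κ x y (k / N) Γ := by
    intro k
    induction k with
    | zero =>
      intro _
      refine ⟨fun _ => x, continuousOn_const, rfl, fun t ht => ?_⟩
      obtain rfl : t = 0 := by simpa using ht
      simp
    | succ k ih =>
      intro hk
      obtain ⟨Γ, hΓ⟩ := ih (Nat.le_of_succ_le hk)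
      refine hext (by positivity) (by gcongr; simp) ?_ ?_ hΓ
      · rw [Nat.cast_succ, add_div, one_div]
        exact add_le_add_right (inv_le_of_inv_le₀ hδ hN.le) _
      · rw [div_le_one hN0]
        exact_mod_cast hk
  obtain ⟨Γ, hcont, hΓ0, hΓ⟩ := hlift N le_rfl
  rw [div_self hN0.ne'] at hcont hΓ
  refine ⟨⟨fun t => Γ t, hcont.comp_continuous continuous_subtype_val fun t => t.2⟩, hΓ0,
    fun t => (hΓ t t.2).1, ?_⟩
  simpa using (hΓ 1 (right_mem_Icc.2 zero_le_one)).2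

end Lifting

section Hadamard

variable {E F : Type*} [NormedAddCommGroup E] [NormedSpace ℝ E]
  [NormedAddCommGroup F] [NormedSpace ℝ F] {S : ℝ}

theorem IsLocalHomeomorph.lift_lineMap_apply_one_eq {g : E → F} (hg : IsLocalHomeomorph g)
    {x' : E} (hlift : ∀ x, ∃ Γ : C(I, E), Γ 0 = x ∧
      ∀ t : I, g (Γ t) = AffineMap.lineMap (g x) (g x') (t : ℝ))
    {x : E} {Γ : C(I, E)} (hΓ0 : Γ 0 = x)
    (hΓ : ∀ t : I, g (Γ t) = AffineMap.lineMap (g x) (g x') (t : ℝ)) :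
    Γ 1 = x' := by
  choose L hL0 hL using hlift
  have hsep := T2Space.isSeparatedMap g
  have hinj := hg.isLocallyInjective
  have hgc : Continuous g := hg.continuous
  let H : C(I × E, F) := ⟨fun q => AffineMap.lineMap (g q.2) (g x') (q.1 : ℝ), by
    simp only [AffineMap.lineMap_apply_module']
    fun_prop⟩
  have hLcont : Continuous fun q : I × E => L q.2 q.1 :=
    hg.continuous_lift hsep H (funext fun q => hL q.2 q.1)
      (by simp only [hL0]; exact continuous_id') fun e => (L e).continuous
  have hend : ∀ e, L e 1 = L x' 1 :=
    fun e => hsep.const_of_comp hinj (hLcont.comp (Continuous.prodMk_right 1))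
      (fun e e' => by simp [hL]) e x'
  have hconst : (L x' : I → E) = fun _ => x' :=
    hsep.eq_of_comp_eq hinj (L x').continuous continuous_const (funext fun t => by simp [hL]) 0
      (hL0 x')
  have hΓL : (Γ : I → E) = L x :=
    hsep.eq_of_comp_eq hinj Γ.continuous (L x).continuous (funext fun t => by simp [hΓ, hL]) 0
      (by rw [hΓ0, hL0])
  rw [congrFun hΓL 1, hend, congrFun hconst 1]

theorem ContinuousLinearMap.exists_equiv_of_mul_norm_le [FiniteDimensional ℝ E]
    {A : E →L[ℝ] E} (hS : 0 < S) (hA : ∀ v, S * ‖v‖ ≤ ‖A v‖) :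
    ∃ A' : E ≃L[ℝ] E, (A' : E →L[ℝ] E) = A ∧ ∀ w, S * ‖A'.symm w‖ ≤ ‖w‖ := by
  have hinj : Function.Injective A := by
    refine (injective_iff_map_eq_zero A).2 fun v hv => norm_le_zero_iff.1 ?_
    have := hA v
    rw [hv, norm_zero] at this
    exact nonpos_of_mul_nonpos_right this hS
  set A' := (LinearEquiv.ofInjectiveEndo (A : E →ₗ[ℝ] E) hinj).toContinuousLinearEquiv
  have hA' : (A' : E →L[ℝ] E) = A := rfl
  refine ⟨A', hA', fun w => ?_⟩
  simpa [← hA'] using hA (A'.symm w)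

theorem ContDiff.isLocalHomeomorph_of_mul_norm_le_fderiv [FiniteDimensional ℝ E] {g : E → E}
    (hg : ContDiff ℝ 1 g) (hS : 0 < S) (h : ∀ x v, S * ‖v‖ ≤ ‖fderiv ℝ g x v‖) :
    IsLocalHomeomorph g := by
  refine IsLocalHomeomorph.mk g fun x => ?_
  obtain ⟨A, hA, -⟩ := (fderiv ℝ g x).exists_equiv_of_mul_norm_le hS (h x)
  have hstrict : HasStrictFDerivAt g (A : E →L[ℝ] E) x := hA ▸ hg.hasStrictFDerivAt one_ne_zero
  exact ⟨hstrict.toOpenPartialHomeomorph g, hstrict.mem_toOpenPartialHomeomorph_source,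
    fun _ _ => rfl⟩

theorem ContDiff.exists_approximatesLinearOn_closedBall {g : E → F} (hg : ContDiff ℝ 1 g)
    {K : Set E} (hK : IsCompact K) {c : ℝ≥0} (hc : 0 < c) :
    ∃ r > 0, ∀ p ∈ K, ApproximatesLinearOn g (fderiv ℝ g p) (closedBall p r) c := by
  obtain ⟨δ, hδ, hδc⟩ := Metric.mem_uniformity_dist.1 <|
    hK.uniformContinuousAt_of_continuousAt _
      (fun p _ => (hg.continuous_fderiv one_ne_zero).continuousAt) (Metric.dist_mem_uniformity hc)
  refine ⟨δ / 2, half_pos hδ, fun p hp u hu v hv => ?_⟩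
  refine (convex_closedBall p (δ / 2)).norm_image_sub_le_of_norm_fderiv_le'
    (fun ξ _ => hg.differentiable one_ne_zero ξ) (fun ξ hξ => ?_) hv hu
  rw [← dist_eq_norm, dist_comm]
  refine (hδc ?_ hp).le
  rw [mem_closedBall, dist_comm] at hξ
  linarith

theorem ApproximatesLinearOn.mul_norm_sub_le {g : E → F} {A : E →L[ℝ] F} {s : Set E}
    {c : ℝ≥0} (hg : ApproximatesLinearOn g A s c) (hA : ∀ v, S * ‖v‖ ≤ ‖A v‖)
    {u v : E} (hu : u ∈ s) (hv : v ∈ s) : (S - c) * ‖u - v‖ ≤ ‖g u - g v‖ := by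
  have h1 := hA (u - v)
  have h2 := hg u hu v hv
  have h3 := norm_sub_norm_le (A (u - v)) (g u - g v)
  rw [norm_sub_rev (A _)] at h3
  linarith

theorem ApproximatesLinearOn.exists_continuousOn_rightInvOn [FiniteDimensional ℝ E]
    {g : E → E} {A : E →L[ℝ] E} {p : E} {r : ℝ} {c : ℝ≥0}
    (hg : ApproximatesLinearOn g A (closedBall p r) c) (hS : 0 < S)
    (hA : ∀ v, S * ‖v‖ ≤ ‖A v‖) (hc : c < S) (hr : 0 ≤ r) :
    ∃ ψ : E → E, ContinuousOn ψ (closedBall (g p) ((S - c) * r)) ∧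
      ∀ z ∈ closedBall (g p) ((S - c) * r), g (ψ z) = z ∧ (S - c) * ‖ψ z - p‖ ≤ ‖z - g p‖ := by
  obtain ⟨A', hA', hA'symm⟩ := A.exists_equiv_of_mul_norm_le hS hA
  have hS' : (S⁻¹.toNNReal : ℝ) = S⁻¹ := Real.coe_toNNReal _ (inv_nonneg.2 hS.le)
  let rinv : A.NonlinearRightInverse :=
    { toFun := A'.symm
      nnnorm := S⁻¹.toNNReal
      bound' := fun w => by
        rw [hS', inv_mul_eq_div, le_div_iff₀' hS]
        exact hA'symm w
      right_inv' := fun w => by rw [← hA']; exact A'.apply_symm_apply w }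
  have hsurj : SurjOn g (closedBall p r) (closedBall (g p) ((S - c) * r)) := by
    simpa [rinv, hS'] using hg.surjOn_closedBall_of_nonlinearRightInverse rinv hr subset_rfl
  set B := closedBall (g p) ((S - c) * r)
  obtain ⟨ψ, hψB, hgψ⟩ : ∃ ψ : E → E, MapsTo ψ B (closedBall p r) ∧ ∀ z ∈ B, g (ψ z) = z :=
    ⟨_, hsurj.mapsTo_invFunOn, fun z hz => hsurj.rightInvOn_invFunOn hz⟩
  have hψ : ∀ z ∈ B, ∀ z' ∈ B, (S - c) * ‖ψ z - ψ z'‖ ≤ ‖z - z'‖ := fun z hz z' hz' => by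
    simpa only [hgψ z hz, hgψ z' hz'] using hg.mul_norm_sub_le hA (hψB hz) (hψB hz')
  have hSc : 0 < S - c := sub_pos.2 hc
  refine ⟨ψ, ?_, fun z hz => ⟨hgψ z hz, ?_⟩⟩
  · refine (LipschitzOnWith.of_dist_le_mul (K := (S - c)⁻¹.toNNReal)
      fun z hz z' hz' => ?_).continuousOn
    rw [Real.coe_toNNReal _ (inv_nonneg.2 hSc.le), dist_eq_norm, dist_eq_norm, inv_mul_eq_div,
      le_div_iff₀' hSc]
    exact hψ z hz z' hz'
  · simpa only [hgψ z hz] using hg.mul_norm_sub_le hA (hψB hz) (mem_closedBall_self hr)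

theorem ContDiff.hasUniformLocalInverses [FiniteDimensional ℝ E] {g : E → E}
    (hg : ContDiff ℝ 1 g) (hS : 0 < S) (h : ∀ x v, S * ‖v‖ ≤ ‖fderiv ℝ g x v‖) {κ : ℝ}
    (hκ0 : 0 < κ) (hκ : κ < S) : HasUniformLocalInverses g κ := by
  intro K hK
  have hc : ((S - κ).toNNReal : ℝ) = S - κ := Real.coe_toNNReal _ (by linarith)
  obtain ⟨r, hr, happrox⟩ :=
    hg.exists_approximatesLinearOn_closedBall hK (c := (S - κ).toNNReal) (by simpa using hκ)
  refine ⟨κ * r, by positivity, fun p hp => ?_⟩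
  have := (happrox p hp).exists_continuousOn_rightInvOn hS (h p) (by linarith) hr.le
  rwa [hc, sub_sub_cancel] at this

theorem ContDiff.mul_norm_sub_le_norm_sub [FiniteDimensional ℝ E] {g : E → E}
    (hg : ContDiff ℝ 1 g) (hS : 0 < S) (h : ∀ x v, S * ‖v‖ ≤ ‖fderiv ℝ g x v‖) (x x' : E) :
    S * ‖x - x'‖ ≤ ‖g x - g x'‖ := by
  have hloc := hg.isLocalHomeomorph_of_mul_norm_le_fderiv hS h
  have key : ∀ κ ∈ Ioo 0 S, κ * ‖x - x'‖ ≤ ‖g x - g x'‖ := by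
    rintro κ ⟨hκ0, hκS⟩
    have hinv := hg.hasUniformLocalInverses hS h hκ0 hκS
    obtain ⟨Γ, hΓ0, hΓ, hbound⟩ := hinv.exists_lift_lineMap hκ0 x (g x')
    rw [hloc.lift_lineMap_apply_one_eq (fun z => (hinv.exists_lift_lineMap hκ0 z (g x')).imp
      fun _ hz => ⟨hz.1, hz.2.1⟩) hΓ0 hΓ] at hbound
    rwa [norm_sub_rev, norm_sub_rev (g x')] at hbound
  exact le_of_tendsto ((continuous_id.mul continuous_const).tendsto S |>.mono_left
    nhdsWithin_le_nhds) (eventually_of_mem (Ioo_mem_nhdsLT hS) key)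

theorem ContDiff.forall_mul_norm_le_fderiv_of_ne_zero {g : E → F} (hg : ContDiff ℝ 1 g)
    (hS : 0 < S) (h : ∀ x, g x ≠ 0 → ∀ v, S * ‖v‖ ≤ ‖fderiv ℝ g x v‖) {x₀ : E}
    (hx₀ : g x₀ ≠ 0) (x v : E) : S * ‖v‖ ≤ ‖fderiv ℝ g x v‖ := by
  set C := {y | ∃ v, ‖fderiv ℝ g y v‖ < S * ‖v‖}
  have hC_open : IsOpen C := by
    simp only [C, ofPred_exists]
    exact isOpen_iUnion fun v => isOpen_lt (by fun_prop) continuous_const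
  have hC_zero : ∀ y ∈ C, g y = 0 := fun y ⟨v, hv⟩ => by_contra fun hy => (h y hy v).not_gt hv
  have hD : ∀ y ∈ closure C, fderiv ℝ g y = 0 := by
    refine fun y hy => closure_minimal (fun z hz => ?_)
      (isClosed_eq (hg.continuous_fderiv one_ne_zero) continuous_const) hy
    have : g =ᶠ[𝓝 z] fun _ => 0 := eventually_of_mem (hC_open.mem_nhds hz) hC_zero
    simpa using this.fderiv_eq
  have hC_closed : IsClosed C := by
    refine closure_subset_iff_isClosed.1 fun y hy => ?_
    obtain ⟨z, v, hv⟩ := closure_nonempty_iff.1 ⟨y, hy⟩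
    have hv0 : v ≠ 0 := by rintro rfl; simp at hv
    exact ⟨v, by simpa [hD y hy] using mul_pos hS (norm_pos_iff.2 hv0)⟩
  rcases isClopen_iff.1 ⟨hC_closed, hC_open⟩ with hC | hC
  · exact not_lt.1 fun hlt => (eq_empty_iff_forall_notMem.1 hC) x ⟨v, hlt⟩
  · exact absurd (hC_zero x₀ (hC ▸ mem_univ x₀)) hx₀

end Hadamard

theorem dist_to_inner_solution_set_le_general {n m : ℕ}
    (Ω : Set (EuclideanSpace ℝ (Fin n)))
    (h : EuclideanSpace ℝ (Fin n) × EuclideanSpace ℝ (Fin m) → ℝ)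
    (hsmooth : ∀ lam : EuclideanSpace ℝ (Fin m), ContDiff ℝ 2 (fun ω => h (ω, lam)))
    (lam' : EuclideanSpace ℝ (Fin m))
    (hne : (innerSol h Ω lam').Nonempty)
    (hcrit : ∀ ωstar ∈ innerSol h Ω lam', gradient (fun ω => h (ω, lam')) ωstar = 0)
    (S : ℝ) (hS : 0 < S)
    (hHess : ∀ ω : EuclideanSpace ℝ (Fin n),
      gradient (fun x => h (x, lam')) ω ≠ 0 →
      ∀ v : EuclideanSpace ℝ (Fin n),
        S * ‖v‖ ≤ ‖fderiv ℝ (fun x => gradient (fun y => h (y, lam')) x) ω v‖) :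
    ∀ ω ∈ Ω,
      Metric.infDist ω (innerSol h Ω lam') ≤ ‖gradient (fun x => h (x, lam')) ω‖ / S := by
  intro ω hω
  set f : EuclideanSpace ℝ (Fin n) → ℝ := fun x => h (x, lam')
  have hg : ContDiff ℝ 1 (gradient f) :=
    (InnerProductSpace.toDual ℝ _).symm.contDiff.comp
      ((hsmooth lam').fderiv_right (m := 1) le_rfl)
  by_cases hzero : ∀ x, gradient f x = 0
  · have hfd : ∀ x, fderiv ℝ f x = 0 := fun x => by rw [← toDual_gradient, hzero x, map_zero]
    have hmem : ω ∈ innerSol h Ω lam' := ⟨hω, fun ω' _ =>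
      (is_const_of_fderiv_eq_zero ((hsmooth lam').differentiable two_ne_zero) hfd ω ω').le⟩
    rw [infDist_zero_of_mem hmem]
    positivity
  obtain ⟨x₀, hx₀⟩ := not_forall.1 hzero
  obtain ⟨ωs, hωs⟩ := hne
  have hbound := hg.mul_norm_sub_le_norm_sub hS
    (hg.forall_mul_norm_le_fderiv_of_ne_zero hS hHess hx₀) ω ωs
  rw [hcrit ωs hωs, sub_zero, ← dist_eq_norm, ← le_div_iff₀' hS] at hbound
  exact (infDist_le_dist_of_mem hωs).trans hbound

/-- The quantitative error-bound step in the proof of Proposition 1: a uniform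
lower bound on the inner Hessian away from critical points turns a small inner
gradient into a small distance to the inner solution set. -/
theorem dist_to_inner_solution_set_le {n m : ℕ}
    (Ω : Set (EuclideanSpace ℝ (Fin n))) (hΩc : IsCompact Ω) (hΩne : Ω.Nonempty)
    (h : EuclideanSpace ℝ (Fin n) × EuclideanSpace ℝ (Fin m) → ℝ)
    (hsmooth : ∀ lam : EuclideanSpace ℝ (Fin m), ContDiff ℝ 2 (fun ω => h (ω, lam)))
    (lam' : EuclideanSpace ℝ (Fin m))
    (hne : (innerSol h Ω lam').Nonempty)
    (hcrit : ∀ ωstar ∈ innerSol h Ω lam', gradient (fun ω => h (ω, lam')) ωstar = 0)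
    (S : ℝ) (hS : 0 < S)
    (hHess : ∀ ω : EuclideanSpace ℝ (Fin n),
      gradient (fun x => h (x, lam')) ω ≠ 0 →
      ∀ v : EuclideanSpace ℝ (Fin n),
        S * ‖v‖ ≤ ‖fderiv ℝ (fun x => gradient (fun y => h (y, lam')) x) ω v‖) :
    ∀ ω ∈ Ω,
      Metric.infDist ω (innerSol h Ω lam') ≤ ‖gradient (fun x => h (x, lam')) ω‖ / S :=
  dist_to_inner_solution_set_le_general Ω h hsmooth lam' hne hcrit S hS hHess
end
end

section
/- Let Ω ⊆ ℝ^n be compact and g, h : ℝ^n × ℝ^m → ℝ be continuous. Suppose λ_n → λ in ℝ^m; ω_n ∈ Ω*_{λ_n} satisfies g(ω_n, λ_n) ≤ g(ω, λ_n) for all ω ∈ Ω*_{λ_n}; ω_n → ω̂; and for every ω ∈ Ω*_λ the distance d(ω, Ω*_{λ_n}) → 0 as n → ∞. Then ω̂ ∈ Ω*_λ and g(ω̂, λ) ≤ g(ω, λ) for all ω ∈ Ω*_λ; that is, ω̂ minimizes g(·, λ) over Ω*_λ. -/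
open Set Filter Metric

noncomputable section

lemma innerSol_isClosed {n m : ℕ}
    (h : EuclideanSpace ℝ (Fin n) × EuclideanSpace ℝ (Fin m) → ℝ)
    (Ω : Set (EuclideanSpace ℝ (Fin n))) (hΩ : IsClosed Ω) (hhcont : Continuous h)
    (lam : EuclideanSpace ℝ (Fin m)) : IsClosed (innerSol h Ω lam) := by
  have : innerSol h Ω lam = Ω ∩ ⋂ ω' ∈ Ω, {ω | h (ω, lam) ≤ h (ω', lam)} := by
    ext x; simp [innerSol]
  rw [this]
  exact hΩ.inter (isClosed_biInter fun ω' _ =>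
    isClosed_le (hhcont.comp (continuous_id.prodMk continuous_const)) continuous_const)

/-- Eqs. (res2)–(res3) in the proof of Lemma 1: under Kuratowski (lower)
convergence of the inner solution sets, limits of inner-selected minimizers of
the improved bilevel model are inner-selected minimizers at the limit parameter. -/
theorem limit_of_inner_selected_minimizers {n m : ℕ}
    (Ω : Set (EuclideanSpace ℝ (Fin n))) (hΩc : IsCompact Ω)
    (g h : EuclideanSpace ℝ (Fin n) × EuclideanSpace ℝ (Fin m) → ℝ)
    (hgcont : Continuous g) (hhcont : Continuous h)
    (lamSeq : ℕ → EuclideanSpace ℝ (Fin m)) (lam : EuclideanSpace ℝ (Fin m))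
    (hlam : Tendsto lamSeq atTop (nhds lam))
    (ωSeq : ℕ → EuclideanSpace ℝ (Fin n))
    (hωmem : ∀ k, ωSeq k ∈ innerSol h Ω (lamSeq k))
    (hωmin : ∀ k, ∀ ω ∈ innerSol h Ω (lamSeq k), g (ωSeq k, lamSeq k) ≤ g (ω, lamSeq k))
    (ωhat : EuclideanSpace ℝ (Fin n))
    (hωconv : Tendsto ωSeq atTop (nhds ωhat))
    (hKura : ∀ ω ∈ innerSol h Ω lam,
      Tendsto (fun k => Metric.infDist ω (innerSol h Ω (lamSeq k))) atTop (nhds 0)) :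
    ωhat ∈ innerSol h Ω lam ∧ ∀ ω ∈ innerSol h Ω lam, g (ωhat, lam) ≤ g (ω, lam) := by
  have hpair : Tendsto (fun k => (ωSeq k, lamSeq k)) atTop (nhds (ωhat, lam)) :=
    hωconv.prodMk_nhds hlam
  have hΩcl : IsClosed Ω := hΩc.isClosed
  have hhatΩ : ωhat ∈ Ω :=
    hΩcl.mem_of_tendsto hωconv (Eventually.of_forall fun k => (hωmem k).1)
  have hmemSol : ωhat ∈ innerSol h Ω lam := by
    refine ⟨hhatΩ, fun ω' hω' => ?_⟩
    have h1 : Tendsto (fun k => h (ωSeq k, lamSeq k)) atTop (nhds (h (ωhat, lam))) :=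
      (hhcont.tendsto _).comp hpair
    have h2 : Tendsto (fun k => h (ω', lamSeq k)) atTop (nhds (h (ω', lam))) :=
      (hhcont.tendsto _).comp ((tendsto_const_nhds.prodMk_nhds hlam))
    exact le_of_tendsto_of_tendsto' h1 h2 fun k => (hωmem k).2 ω' hω'
  refine ⟨hmemSol, fun ω hω => ?_⟩
  -- choose nearest points
  have hclk : ∀ k, IsClosed (innerSol h Ω (lamSeq k)) := fun k =>
    innerSol_isClosed h Ω hΩcl hhcont (lamSeq k)
  have hcomp : ∀ k, IsCompact (innerSol h Ω (lamSeq k)) := fun k =>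
    hΩc.of_isClosed_subset (hclk k) (fun x hx => hx.1)
  have hne : ∀ k, (innerSol h Ω (lamSeq k)).Nonempty := fun k => ⟨ωSeq k, hωmem k⟩
  choose z hz hzd using fun k => (hcomp k).exists_infDist_eq_dist (hne k) ω
  have hzconv : Tendsto z atTop (nhds ω) := by
    rw [tendsto_iff_dist_tendsto_zero]
    have := hKura ω hω
    simpa [fun k => (hzd k).symm, dist_comm] using this
  have h1 : Tendsto (fun k => g (ωSeq k, lamSeq k)) atTop (nhds (g (ωhat, lam))) :=
    (hgcont.tendsto _).comp hpair
  have h2 : Tendsto (fun k => g (z k, lamSeq k)) atTop (nhds (g (ω, lam))) :=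
    (hgcont.tendsto _).comp (hzconv.prodMk_nhds hlam)
  exact le_of_tendsto_of_tendsto' h1 h2 fun k => hωmin k (z k) (hz k)
end
end

section
/- Let Λ ⊆ ℝ^m be compact and nonempty, Ω ⊆ ℝ^n compact and nonempty, and g : ℝ^n × ℝ^m → ℝ L_g-Lipschitz continuous. For each λ ∈ Λ let ω_λ ∈ Ω*_λ satisfy g(ω_λ, λ) ≤ g(ω, λ) for all ω ∈ Ω*_λ, and suppose f(λ) = g(ω_λ, λ) is continuous on Λ. For each K ∈ ℕ let ω_K : Λ → Ω be such that f_K(λ) = g(ω_K(λ), λ) is continuous on Λ, and suppose sup_{λ∈Λ} ‖ω_K(λ) − ω_λ‖ → 0 as K → ∞. If λ_K minimizes f_K over Λ for each K and a subsequence λ_{K_j} converges to λ̄ ∈ Λ, then λ̄ minimizes f over Λ. -/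
open Set Filter Metric

noncomputable section

/-- Theorem 1(ii): accumulation points of the minimizers of the approximate
value functions `f_K(λ) = g(ω_K(λ), λ)` are minimizers of the value function
`f(λ) = g(ω_λ, λ)` of the improved bilevel model. -/
theorem accumulation_of_approx_minimizers_is_minimizer {n m : ℕ}
    (Λ : Set (EuclideanSpace ℝ (Fin m))) (hΛc : IsCompact Λ) (hΛne : Λ.Nonempty)
    (Ω : Set (EuclideanSpace ℝ (Fin n))) (hΩc : IsCompact Ω) (hΩne : Ω.Nonempty)
    (g : EuclideanSpace ℝ (Fin n) × EuclideanSpace ℝ (Fin m) → ℝ)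
    (Lg : NNReal) (hgLip : LipschitzWith Lg g)
    (h : EuclideanSpace ℝ (Fin n) × EuclideanSpace ℝ (Fin m) → ℝ)
    (hhcont : Continuous h)
    (ωsel : EuclideanSpace ℝ (Fin m) → EuclideanSpace ℝ (Fin n))
    (hsel_mem : ∀ lam ∈ Λ, ωsel lam ∈ innerSol h Ω lam)
    (hsel_min : ∀ lam ∈ Λ, ∀ ω ∈ innerSol h Ω lam, g (ωsel lam, lam) ≤ g (ω, lam))
    (hf_cont : ContinuousOn (fun lam => g (ωsel lam, lam)) Λ)
    (ωK : ℕ → EuclideanSpace ℝ (Fin m) → EuclideanSpace ℝ (Fin n))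
    (hωK_mem : ∀ K, ∀ lam ∈ Λ, ωK K lam ∈ Ω)
    (hfK_cont : ∀ K, ContinuousOn (fun lam => g (ωK K lam, lam)) Λ)
    (hunif : TendstoUniformlyOn (fun K lam => ωK K lam) ωsel atTop Λ)
    (lamK : ℕ → EuclideanSpace ℝ (Fin m))
    (hlamK_mem : ∀ K, lamK K ∈ Λ)
    (hlamK_min : ∀ K, ∀ lam ∈ Λ, g (ωK K (lamK K), lamK K) ≤ g (ωK K lam, lam))
    (Kj : ℕ → ℕ) (hKj : StrictMono Kj)
    (lamBar : EuclideanSpace ℝ (Fin m)) (hlamBar : lamBar ∈ Λ)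
    (hsub : Tendsto (fun j => lamK (Kj j)) atTop (nhds lamBar)) :
    ∀ lam ∈ Λ, g (ωsel lamBar, lamBar) ≤ g (ωsel lam, lam) := by
  intro lam hlam
  -- convergence of lamK (Kj j) within Λ
  have hsubW : Tendsto (fun j => lamK (Kj j)) atTop (nhdsWithin lamBar Λ) :=
    tendsto_nhdsWithin_of_tendsto_nhds_of_eventually_within _ hsub
      (Eventually.of_forall fun j => hlamK_mem (Kj j))
  -- a_j := f (lamK (Kj j)) → f lamBar
  have ha : Tendsto (fun j => g (ωsel (lamK (Kj j)), lamK (Kj j))) atTop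
      (nhds (g (ωsel lamBar, lamBar))) :=
    (hf_cont lamBar hlamBar).tendsto.comp hsubW
  -- uniform distance → 0 along the subsequence evaluated at lamK (Kj j)
  have hd0 : Tendsto (fun j => dist (ωK (Kj j) (lamK (Kj j))) (ωsel (lamK (Kj j)))) atTop
      (nhds 0) := by
    rw [Metric.tendstoUniformlyOn_iff] at hunif
    rw [Metric.tendsto_atTop]
    intro ε hε
    obtain ⟨N, hN⟩ := (hunif ε hε).exists_forall_of_atTop
    obtain ⟨N', hN'⟩ := (hKj.tendsto_atTop.eventually_ge_atTop N).exists_forall_of_atTop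
    refine ⟨N', fun j hj => ?_⟩
    have := hN (Kj j) (hN' j hj) (lamK (Kj j)) (hlamK_mem (Kj j))
    rw [Real.dist_0_eq_abs, abs_of_nonneg dist_nonneg, dist_comm]
    exact this
  -- b_j := fK_j (lamK (Kj j)) → f lamBar
  have hdist_le : ∀ j, dist (g (ωK (Kj j) (lamK (Kj j)), lamK (Kj j)))
      (g (ωsel (lamK (Kj j)), lamK (Kj j)))
      ≤ Lg * dist (ωK (Kj j) (lamK (Kj j))) (ωsel (lamK (Kj j))) := by
    intro j
    have := hgLip.dist_le_mul (ωK (Kj j) (lamK (Kj j)), lamK (Kj j))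
      (ωsel (lamK (Kj j)), lamK (Kj j))
    simpa [Prod.dist_eq, max_eq_left dist_nonneg] using this
  have hb : Tendsto (fun j => g (ωK (Kj j) (lamK (Kj j)), lamK (Kj j))) atTop
      (nhds (g (ωsel lamBar, lamBar))) := by
    refine ha.congr_dist ?_
    have hmul : Tendsto (fun j => (Lg : ℝ) * dist (ωK (Kj j) (lamK (Kj j)))
        (ωsel (lamK (Kj j)))) atTop (nhds 0) := by
      simpa using hd0.const_mul (Lg : ℝ)
    refine squeeze_zero (fun j => dist_nonneg) (fun j => ?_) hmul
    rw [dist_comm]; exact hdist_le j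
  -- c_j := fK_j lam → f lam
  have hc : Tendsto (fun j => g (ωK (Kj j) lam, lam)) atTop (nhds (g (ωsel lam, lam))) := by
    have hpt : Tendsto (fun K => ωK K lam) atTop (nhds (ωsel lam)) := hunif.tendsto_at hlam
    have hpt' : Tendsto (fun j => ωK (Kj j) lam) atTop (nhds (ωsel lam)) :=
      hpt.comp hKj.tendsto_atTop
    have : Tendsto (fun j => (ωK (Kj j) lam, lam)) atTop (nhds (ωsel lam, lam)) :=
      hpt'.prodMk_nhds tendsto_const_nhds
    exact (hgLip.continuous.tendsto _).comp this
  exact le_of_tendsto_of_tendsto' hb hc fun j => hlamK_min (Kj j) lam hlam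
end
end
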